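/- In the on-chain-verified audit game, assume (i) S_a > ((1 − p_a)/p_a)·R_a + c_a/(ε·p_a), (ii) R_a > c_a/(1 − ε), and (iii) R_s > c_s, and suppose all SPs other than i play the honest strategy σ^h. Then for every strategy σ_i of SP i with s_i = 0, the strategy σ_i' obtained from σ_i by changing only s_i to 1 satisfies u_i(σ_i', σ^h_{−i}) = u_i(σ_i, σ^h_{−i}) + R_s − c_s > u_i(σ_i, σ^h_{−i}); i.e. storing is a strictly better response than not storing. -/

import Mathlib

/-!
On-chain-verified audit game: `N ≥ 3` storage providers (SPs), parameters
`R_s > 0` (storage reward), `R_a > 0` (per-audit reward), `c_s > 0` (storage cost),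
`c_a > 0` (audit cost), `S_a ≥ 0` (slashing penalty), `p_a ∈ (0,1]` (inspection
probability), `ε ∈ (0,1)` (noise). A pure strategy of SP `i` is a triple `(s, a, ρ)`:
a storage bit, audit bits for each other SP, and reporting policies `ρ j : Bool → Bool`
(report as a function of having received a valid proof).
-/

open Finset

/-- A pure strategy of storage provider `i` in the on-chain-verified audit game. -/
structure Strat (N : ℕ) (i : Fin N) where
  /-- whether `i` stores its assigned data -/
  s : Bool
  /-- whether `i` audits SP `j` (at cost `c_a`) -/
  a : {j : Fin N // j ≠ i} → Bool
  /-- `i`'s reporting policy about `j`, as a function of whether a valid proof was received -/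
  ρ : {j : Fin N // j ≠ i} → Bool → Bool

/-- Numerical value of a Boolean choice. -/
def b01 (b : Bool) : ℝ := if b then 1 else 0

/-- Expected audit payoff of the auditor from one ordered pair `(i,j)`, where `sj` is the
auditee's storage bit, `a` the auditor's audit bit, and `ρ` the auditor's reporting policy.
The backing probability is `β = 1 − ε` if the auditee stores and `0` otherwise; an unbacked
✓ report earns `(1 − p_a)·R_a − p_a·S_a` in expectation. -/
noncomputable def pairPayoff (Ra ca Sa pa ε : ℝ) (sj a : Bool) (ρ : Bool → Bool) : ℝ :=
  let β : ℝ := if sj then 1 - ε else 0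
  let F : ℝ := (1 - pa) * Ra - pa * Sa
  if a then β * b01 (ρ true) * Ra + (1 - β) * b01 (ρ false) * F - ca
  else b01 (ρ false) * (β * Ra + (1 - β) * F)

/-- The deterministic report of `i` about `j`: `r_i^j = ρ_i^j (a_i^j · s_j)`. -/
def report {N : ℕ} (σ : ∀ i : Fin N, Strat N i) (i : Fin N) (j : {j : Fin N // j ≠ i}) : Bool :=
  (σ i).ρ j ((σ i).a j && (σ j.1).s)

/-- Number of SPs `j ≠ i` whose deterministic report about `i` is ✓. -/
def trueReports {N : ℕ} (σ : ∀ i : Fin N, Strat N i) (i : Fin N) : ℕ :=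
  (univ.filter fun j : {j : Fin N // j ≠ i} => report σ j.1 ⟨i, Ne.symm j.2⟩ = true).card

/-- Total (expected) utility of SP `i`:
`u_i(σ) = R_s·1[|{j ≠ i : r_j^i = 1}| > N/2] − c_s·s_i + Σ_{j≠i} pairPayoff(i,j)`. -/
noncomputable def U {N : ℕ} (Rs Ra cs ca Sa pa ε : ℝ) (σ : ∀ i : Fin N, Strat N i)
    (i : Fin N) : ℝ :=
  Rs * (if (N : ℝ) / 2 < (trueReports σ i : ℝ) then 1 else 0)
    - cs * b01 (σ i).s
    + ∑ j : {j : Fin N // j ≠ i}, pairPayoff Ra ca Sa pa ε (σ j.1).s ((σ i).a j) ((σ i).ρ j)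

/-- Pure Nash equilibrium: no SP can strictly increase its own utility by unilaterally
changing its strategy. -/
def IsNashEq {N : ℕ} (Rs Ra cs ca Sa pa ε : ℝ) (σ : ∀ i : Fin N, Strat N i) : Prop :=
  ∀ (i : Fin N) (τ : Strat N i),
    U Rs Ra cs ca Sa pa ε (Function.update σ i τ) i ≤ U Rs Ra cs ca Sa pa ε σ i

/-- The honest strategy profile: store, audit everyone, report ✓ iff a valid proof
was received. -/
def honest (N : ℕ) : ∀ i : Fin N, Strat N i :=
  fun _ => ⟨true, fun _ => true, fun _ b => b⟩

/-- The fully dishonest strategy profile: don't store, don't audit, always report ✓. -/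
def dishonest (N : ℕ) : ∀ i : Fin N, Strat N i :=
  fun _ => ⟨false, fun _ => false, fun _ _ => true⟩

/-!
Against honest opponents every other SP audits `i` and reports ✓ exactly when `i` stores,
so `i` wins the majority vote (`N - 1 > N / 2` as `N ≥ 3`) iff it stores, while its own
audit payoffs do not depend on its storage bit. Hence its utility is
`(R_s - c_s)·s_i` plus a term independent of `s_i`.
-/

open Function

section HonestOpponents

variable {N : ℕ} {i : Fin N}

lemma report_update_honest (τ : Strat N i) (j : {j : Fin N // j ≠ i}) :
    report (update (honest N) i τ) j.1 ⟨i, Ne.symm j.2⟩ = τ.s := by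
  simp [report, update_of_ne j.2, honest]

lemma trueReports_update_honest (τ : Strat N i) :
    trueReports (update (honest N) i τ) i = if τ.s then N - 1 else 0 := by
  simp only [trueReports, report_update_honest]
  cases τ.s <;> simp [Fintype.card_subtype_compl]

lemma majority_update_honest (hN : 3 ≤ N) (τ : Strat N i) :
    (if (N : ℝ) / 2 < (trueReports (update (honest N) i τ) i : ℝ) then (1 : ℝ) else 0)
      = b01 τ.s := by
  rw [trueReports_update_honest]
  have hN' : (3 : ℝ) ≤ N := by exact_mod_cast hN
  cases τ.s
  · simp [b01, show (0 : ℝ) ≤ N / 2 by positivity]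
  · simp [b01, show (N : ℝ) / 2 < ((N - 1 : ℕ) : ℝ) by rw [Nat.cast_sub (by omega)]; linarith]

lemma U_update_honest (hN : 3 ≤ N) (Rs Ra cs ca Sa pa ε : ℝ) (τ : Strat N i) :
    U Rs Ra cs ca Sa pa ε (update (honest N) i τ) i
      = (Rs - cs) * b01 τ.s + ∑ j, pairPayoff Ra ca Sa pa ε true (τ.a j) (τ.ρ j) := by
  have hpay : ∀ j : {j : Fin N // j ≠ i},
      pairPayoff Ra ca Sa pa ε (update (honest N) i τ j.1).s (τ.a j) (τ.ρ j)
        = pairPayoff Ra ca Sa pa ε true (τ.a j) (τ.ρ j) := fun j => by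
    rw [update_of_ne j.2]; rfl
  rw [U, majority_update_honest hN, update_self, Finset.sum_congr rfl fun j _ => hpay j]
  ring

end HonestOpponents

theorem storing_strictly_better_response_general
    (N : ℕ) (hN : 3 ≤ N) (Rs Ra cs ca Sa pa ε : ℝ)
    (h3 : cs < Rs)
    (i : Fin N) (τ : Strat N i) (hτ : τ.s = false) :
    U Rs Ra cs ca Sa pa ε (Function.update (honest N) i ⟨true, τ.a, τ.ρ⟩) i
        = U Rs Ra cs ca Sa pa ε (Function.update (honest N) i τ) i + Rs - cs ∧
    U Rs Ra cs ca Sa pa ε (Function.update (honest N) i τ) i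
        < U Rs Ra cs ca Sa pa ε (Function.update (honest N) i ⟨true, τ.a, τ.ρ⟩) i := by
  have hstore := U_update_honest hN Rs Ra cs ca Sa pa ε ⟨true, τ.a, τ.ρ⟩
  have hskip := U_update_honest hN Rs Ra cs ca Sa pa ε τ
  simp only [hτ, b01, Bool.false_eq_true, if_true, if_false, mul_one, mul_zero] at hstore hskip
  rw [hstore, hskip]
  constructor <;> linarith

/-- Under the strict conditions (i) `S_a > ((1 − p_a)/p_a)·R_a + c_a/(ε·p_a)`,
(ii) `R_a > c_a/(1 − ε)`, (iii) `R_s > c_s`, if all SPs other than `i` play the honest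
strategy, then for every strategy `τ` of SP `i` with `s_i = 0`, switching only its storage
bit to `1` raises `i`'s utility by exactly `R_s − c_s > 0`; i.e. storing is a strictly
better response than not storing. -/
theorem storing_strictly_better_response
    (N : ℕ) (hN : 3 ≤ N) (Rs Ra cs ca Sa pa ε : ℝ)
    (hRs : 0 < Rs) (hRa : 0 < Ra) (hcs : 0 < cs) (hca : 0 < ca) (hSa : 0 ≤ Sa)
    (hpa0 : 0 < pa) (hpa1 : pa ≤ 1) (hε0 : 0 < ε) (hε1 : ε < 1)
    (h1 : ((1 - pa) / pa) * Ra + ca / (ε * pa) < Sa)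
    (h2 : ca / (1 - ε) < Ra)
    (h3 : cs < Rs)
    (i : Fin N) (τ : Strat N i) (hτ : τ.s = false) :
    U Rs Ra cs ca Sa pa ε (Function.update (honest N) i ⟨true, τ.a, τ.ρ⟩) i
        = U Rs Ra cs ca Sa pa ε (Function.update (honest N) i τ) i + Rs - cs ∧
    U Rs Ra cs ca Sa pa ε (Function.update (honest N) i τ) i
        < U Rs Ra cs ca Sa pa ε (Function.update (honest N) i ⟨true, τ.a, τ.ρ⟩) i :=
  storing_strictly_better_response_general N hN Rs Ra cs ca Sa pa ε h3 i τ hτ
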